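/- arXiv:1307.0230 — 3 statements merged into one kernel-verified Lean document; each statement's English description precedes it below -/
import Mathlib

section
/- Let (Ω, F, P) be a probability space and W : Ω → [0, ∞) an integrable random variable, and fix y with 0 < y < E[W]. Then the set {c > 0 : E[W·1_{cW < 1}] ≤ y} is nonempty, so ĉ := inf{c > 0 : E[W·1_{cW < 1}] ≤ y} is well defined and ĉ > 0. Assume moreover that E[W·1_{ĉW < 1}] = y. Then the set A := {ĉW < 1} is optimal for the quantile problem: for every measurable φ : Ω → [0, 1] with E[Wφ] ≤ y, one has E[φ] ≤ P(ĉW < 1). -/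
/-!
The constant `c = y⁻¹` is admissible, since `W < y` on `{y⁻¹W < 1}` and `P ≤ 1`.
Since `∫_{W < n} W → E[W] > y` and `{W < n} ⊆ {cW < 1}` for `c ≤ 1/n`, no `c ≤ 1/n` is admissible
for large `n`, whence `ĉ > 0`.
Optimality is the Neyman–Pearson argument: with `A = {ĉW < 1}` and `φ` valued in `[0, 1]`,
pointwise `φ (1 - ĉW) ≤ 1_A (1 - ĉW)`; integrating gives
`E[φ] - ĉ E[Wφ] ≤ P(A) - ĉ E[W 1_A] = P(A) - ĉ y`, and `E[Wφ] ≤ y` concludes.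
-/

open MeasureTheory Set Filter Topology

lemma mul_le_indicator_setOf_pos {α : Type*} {φ h : α → ℝ} {x : α} (hφ : φ x ∈ Icc 0 1) :
    φ x * h x ≤ {y | 0 < h y}.indicator h x := by
  by_cases hx : 0 < h x
  · rw [indicator_of_mem (show x ∈ {y | 0 < h y} from hx)]
    exact mul_le_of_le_one_left hx.le hφ.2
  · rw [indicator_of_notMem (show x ∉ {y | 0 < h y} from hx)]
    exact mul_nonpos_of_nonneg_of_nonpos hφ.1 (not_lt.1 hx)

section

variable {Ω : Type*} [MeasurableSpace Ω] {μ : Measure Ω}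

lemma integral_mul_le_setIntegral_setOf_pos {φ h : Ω → ℝ} (hφ : Measurable φ)
    (hφ01 : ∀ x, φ x ∈ Icc 0 1) (hh : Integrable h μ) (hhm : Measurable h) :
    ∫ x, φ x * h x ∂μ ≤ ∫ x in {x | 0 < h x}, h x ∂μ := by
  have hpos : MeasurableSet {x | 0 < h x} := measurableSet_lt measurable_const hhm
  rw [← integral_indicator hpos]
  refine integral_mono (hh.bdd_mul hφ.aestronglyMeasurable (c := 1) (.of_forall fun x => ?_))
    (hh.indicator hpos) fun x => mul_le_indicator_setOf_pos (hφ01 x)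
  rw [Real.norm_of_nonneg (hφ01 x).1]
  exact (hφ01 x).2

lemma tendsto_setIntegral_setOf_lt_natCast {E : Type*} [NormedAddCommGroup E] [NormedSpace ℝ E]
    {f : Ω → E} {g : Ω → ℝ} (hf : Integrable f μ) (hg : Measurable g) :
    Tendsto (fun n : ℕ => ∫ x in {x | g x < n}, f x ∂μ) atTop (𝓝 (∫ x, f x ∂μ)) := by
  have hcover : ⋃ n : ℕ, {x | g x < n} = univ :=
    eq_univ_of_forall fun x => mem_iUnion.2 (exists_nat_gt (g x))
  have h := tendsto_setIntegral_of_monotone (μ := μ) (f := f) (s := fun n : ℕ => {x | g x < n})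
    (fun n => measurableSet_lt hg measurable_const)
    (fun _ _ hnm x (hx : g x < _) => lt_of_lt_of_le hx (Nat.cast_le.2 hnm))
    (by rw [hcover]; exact hf.integrableOn)
  rwa [hcover, setIntegral_univ] at h

variable {W : Ω → ℝ}

lemma setIntegral_setOf_mul_lt_one_le_inv [IsProbabilityMeasure μ] (hW : Integrable W μ)
    (hWm : Measurable W) {c : ℝ} (hc : 0 < c) :
    ∫ x in {x | c * W x < 1}, W x ∂μ ≤ c⁻¹ := by
  have hA : MeasurableSet {x | c * W x < 1} :=
    measurableSet_lt (measurable_const.mul hWm) measurable_const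
  calc ∫ x in {x | c * W x < 1}, W x ∂μ
      ≤ ∫ _ in {x | c * W x < 1}, c⁻¹ ∂μ :=
        setIntegral_mono_on hW.integrableOn (integrableOn_const (measure_ne_top _ _)) hA
          fun x hx => by
            rw [← one_div]
            exact ((lt_div_iff₀' hc).2 hx).le
    _ = μ.real {x | c * W x < 1} * c⁻¹ := by rw [setIntegral_const, smul_eq_mul]
    _ ≤ c⁻¹ := mul_le_of_le_one_left (inv_nonneg.2 hc.le) measureReal_le_one

lemma exists_pos_forall_le_lt_setIntegral_setOf_mul_lt_one (hW : Integrable W μ)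
    (hWm : Measurable W) (hW0 : ∀ x, 0 ≤ W x) {y : ℝ} (hy : y < ∫ x, W x ∂μ) :
    ∃ ε > 0, ∀ c ≤ ε, y < ∫ x in {x | c * W x < 1}, W x ∂μ := by
  obtain ⟨N, hN⟩ := eventually_atTop.1 <|
    (tendsto_setIntegral_setOf_lt_natCast hW hWm).eventually (lt_mem_nhds hy)
  set n := max N 1
  have hn : (0 : ℝ) < n := by exact_mod_cast (le_max_right N 1)
  refine ⟨(n : ℝ)⁻¹, inv_pos.2 hn, fun c hc => (hN n (le_max_left N 1)).trans_le ?_⟩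
  refine setIntegral_mono_set hW.integrableOn (.of_forall hW0)
    (.of_forall fun x (hx : W x < n) => ?_)
  calc c * W x ≤ (n : ℝ)⁻¹ * W x := mul_le_mul_of_nonneg_right hc (hW0 x)
    _ < 1 := (inv_mul_lt_iff₀ hn).2 (by rwa [mul_one])

theorem integral_le_measureReal_setOf_mul_lt_one [IsFiniteMeasure μ] (hW : Integrable W μ)
    (hWm : Measurable W) {c : ℝ} (hc : 0 ≤ c) {φ : Ω → ℝ} (hφ : Measurable φ)
    (hφ01 : ∀ x, φ x ∈ Icc 0 1)
    (hbudget : ∫ x, W x * φ x ∂μ ≤ ∫ x in {x | c * W x < 1}, W x ∂μ) :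
    ∫ x, φ x ∂μ ≤ μ.real {x | c * W x < 1} := by
  have hφbound : ∀ᵐ x ∂μ, ‖φ x‖ ≤ 1 := .of_forall fun x => by
    rw [Real.norm_of_nonneg (hφ01 x).1]
    exact (hφ01 x).2
  have hφint : Integrable φ μ := .of_bound hφ.aestronglyMeasurable 1 hφbound
  have hWφint : Integrable (fun x => W x * φ x) μ := hW.mul_bdd hφ.aestronglyMeasurable hφbound
  have key := integral_mul_le_setIntegral_setOf_pos (h := fun x => 1 - c * W x) hφ hφ01
    ((integrable_const 1).sub (hW.const_mul c)) (measurable_const.sub (hWm.const_mul c))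
  have hset : {x | 0 < 1 - c * W x} = {x | c * W x < 1} := by simp only [sub_pos]
  have hlhs : ∫ x, φ x * (1 - c * W x) ∂μ = ∫ x, φ x ∂μ - c * ∫ x, W x * φ x ∂μ := by
    rw [← integral_const_mul, ← integral_sub hφint (hWφint.const_mul c)]
    congr 1 with x
    ring
  have hrhs : ∫ x in {x | c * W x < 1}, (1 - c * W x) ∂μ
      = μ.real {x | c * W x < 1} - c * ∫ x in {x | c * W x < 1}, W x ∂μ := by
    rw [integral_sub (integrable_const 1) (hW.const_mul c).integrableOn, setIntegral_const,
      smul_eq_mul, mul_one, integral_const_mul]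
  rw [hset, hlhs, hrhs] at key
  linarith [mul_le_mul_of_nonneg_left hbudget hc]

end

/-- **Quantile hedging, static form.**
For an integrable `W ≥ 0` and `0 < y < E[W]`, the set `{c > 0 : E[W·1_{cW<1}] ≤ y}` is
nonempty, its infimum `ĉ` is (strictly) positive, and if `E[W·1_{ĉW<1}] = y` then the event
`{ĉW < 1}` is optimal: every randomized test `φ : Ω → [0,1]` with `E[Wφ] ≤ y` satisfies
`E[φ] ≤ P(ĉW < 1)`. -/
theorem stmt_13
    {Ω : Type*} [MeasurableSpace Ω] (P : Measure Ω) [IsProbabilityMeasure P]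
    (W : Ω → ℝ) (hWmeas : Measurable W) (hWpos : ∀ ω, 0 ≤ W ω)
    (hWint : Integrable W P)
    (y : ℝ) (hy : 0 < y) (hy' : y < ∫ ω, W ω ∂P)
    (S : Set ℝ)
    (hS : S = {c : ℝ | 0 < c ∧ (∫ ω in {ω | c * W ω < 1}, W ω ∂P) ≤ y}) :
    S.Nonempty ∧ 0 < sInf S ∧
    ((∫ ω in {ω | sInf S * W ω < 1}, W ω ∂P) = y →
      ∀ φ : Ω → ℝ, Measurable φ → (∀ ω, φ ω ∈ Icc (0:ℝ) 1) →
        (∫ ω, W ω * φ ω ∂P) ≤ y →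
        (∫ ω, φ ω ∂P) ≤ (P {ω | sInf S * W ω < 1}).toReal) := by
  have hne : S.Nonempty := ⟨y⁻¹, hS ▸ ⟨inv_pos.2 hy, by
    simpa using setIntegral_setOf_mul_lt_one_le_inv hWint hWmeas (inv_pos.2 hy)⟩⟩
  obtain ⟨ε, hε, hsmall⟩ :=
    exists_pos_forall_le_lt_setIntegral_setOf_mul_lt_one hWint hWmeas hWpos hy'
  have hpos : 0 < sInf S := hε.trans_le <| le_csInf hne fun c hc =>
    le_of_not_ge fun hcε => (hsmall c hcε).not_ge (hS ▸ hc).2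
  refine ⟨hne, hpos, fun hEq φ hφ hφ01 hbudget => ?_⟩
  exact integral_le_measureReal_setOf_mul_lt_one hWint hWmeas hpos.le hφ hφ01
    (hbudget.trans hEq.ge)
end

section
/- Let Ω be a nonempty finite set, P a probability measure on Ω with P({ω}) > 0 for every ω, H : Ω → (0, ∞) with E[H] = 1, and x ∈ ℝ. Let U : ℝ → ℝ be differentiable, strictly concave and strictly increasing, with derivative U' satisfying the Inada conditions U'(z) → ∞ as z → −∞ and U'(z) → 0 as z → +∞ (so that U' is a strictly decreasing bijection from ℝ onto (0, ∞)); let I := (U')⁻¹ : (0, ∞) → ℝ and define Ũ(y) := sup_{z ∈ ℝ} (U(z) − zy) for y > 0. Then: (i) there exists λ̂ > 0 with E[H·I(λ̂H)] = x; (ii) sup { E[U(G)] : G : Ω → ℝ, E[HG] ≤ x } = E[U(I(λ̂H))] = E[Ũ(λ̂H)] + λ̂x, and the supremum is attained at Ĝ := I(λ̂H); (iii) E[Ũ(λ̂H)] + λ̂x = min_{λ > 0} (E[Ũ(λH)] + λx). -/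
/-! The budget `λ ↦ E[H · I(λH)]` is continuous and decreases from `+∞` to `-∞` (squeeze it
between `E[H] · I(λ max H)` and `E[H] · I(λ min H)`), so some `λ̂ > 0` saturates it. The
tangent-line inequality of the concave `U` at `I(y)`, where the slope is `y`, shows that the
supremum defining `Ũ(y)` is attained at `I(y)`. Integrating `U(G) − λHG ≤ Ũ(λH)` gives weak
duality `E[U(G)] ≤ E[Ũ(λH)] + λx` for every budget-feasible `G` and every `λ > 0`, with
equality at `(I(λ̂H), λ̂)`; (ii) and (iii) follow. -/

open MeasureTheory Set Filter Topology

theorem ConcaveOn.le_add_mul_sub_of_hasDerivAt {U : ℝ → ℝ} {S : Set ℝ} (hU : ConcaveOn ℝ S U)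
    {z w d : ℝ} (hz : z ∈ S) (hw : w ∈ S) (hUw : HasDerivAt U d w) :
    U z ≤ U w + d * (z - w) := by
  rcases lt_trichotomy z w with h | rfl | h
  · have hslope := hU.le_slope_of_hasDerivAt hz hw h hUw
    rw [slope_def_field, le_div_iff₀ (sub_pos.2 h)] at hslope
    linarith
  · simp
  · have hslope := hU.slope_le_of_hasDerivAt hw hz h hUw
    rw [slope_def_field, div_le_iff₀ (sub_pos.2 h)] at hslope
    linarith

theorem StrictConcaveOn.strictAnti_of_hasDerivAt {U U' : ℝ → ℝ} (hU : StrictConcaveOn ℝ univ U)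
    (hU' : ∀ z, HasDerivAt U (U' z) z) : StrictAnti U' := by
  intro a b hab
  simpa only [(hU' _).deriv] using
    hU.strictAntiOn_deriv (fun z _ => (hU' z).differentiableAt) (mem_univ a) (mem_univ b) hab

theorem StrictAnti.pos_of_tendsto_atTop_zero {f : ℝ → ℝ} (hf : StrictAnti f)
    (h0 : Tendsto f atTop (𝓝 0)) (z : ℝ) : 0 < f z :=
  (hf.antitone.le_of_tendsto h0 (z + 1)).trans_lt (hf (lt_add_one z))

section Inverse

variable {D I : ℝ → ℝ}

theorem StrictAnti.strictAntiOn_of_rightInvOn (hD : StrictAnti D)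
    (hDI : ∀ y ∈ Ioi (0 : ℝ), D (I y) = y) : StrictAntiOn I (Ioi 0) := fun a ha b hb hab =>
  hD.lt_iff_gt.1 (by rwa [hDI a ha, hDI b hb])

variable (hIanti : StrictAntiOn I (Ioi 0)) (hD : ∀ z, 0 < D z) (hID : ∀ z, I (D z) = z)
include hIanti hD hID

theorem continuousOn_of_strictAntiOn_of_leftInverse : ContinuousOn I (Ioi 0) := by
  have himage : (-I) '' Ioi 0 = univ :=
    eq_univ_of_forall fun r => ⟨D (-r), hD (-r), by simp [hID]⟩
  intro y hy
  have hcont : ContinuousAt (-I) y :=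
    continuousAt_of_monotoneOn_of_image_mem_nhds hIanti.antitoneOn.neg (Ioi_mem_nhds hy)
      (himage ▸ univ_mem)
  simpa using hcont.neg.continuousWithinAt

theorem tendsto_nhdsGT_zero_atTop_of_strictAntiOn_of_leftInverse :
    Tendsto I (𝓝[>] 0) atTop :=
  tendsto_atTop.2 fun M => mem_of_superset (Ioo_mem_nhdsGT (hD M)) fun _ hy =>
    hID M ▸ hIanti.antitoneOn hy.1 (hD M) hy.2.le

theorem tendsto_atTop_atBot_of_strictAntiOn_of_leftInverse : Tendsto I atTop atBot :=
  tendsto_atBot.2 fun M => (eventually_ge_atTop (D M)).mono fun _ hy =>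
    hID M ▸ hIanti.antitoneOn (hD M) ((hD M).trans_le hy) hy

end Inverse

section FiniteSpace

variable {Ω : Type*} [Fintype Ω] [MeasurableSpace Ω] [MeasurableSingletonClass Ω]
  {P : Measure Ω} [IsFiniteMeasure P]

theorem continuous_integral_of_fintype {α : Type*} [TopologicalSpace α] {F : α → Ω → ℝ}
    (hF : ∀ ω, Continuous fun a => F a ω) : Continuous fun a => ∫ ω, F a ω ∂P := by
  have hsum : Continuous fun a => ∑ ω, P.real {ω} • F a ω :=
    continuous_finsetSum _ fun ω _ => continuous_const.mul (hF ω)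
  exact hsum.congr fun a => (integral_fintype .of_finite).symm

theorem exists_pos_integral_mul_comp_mul_eq [Nonempty Ω] {H : Ω → ℝ} {I : ℝ → ℝ}
    (hH : ∀ ω, 0 < H ω) (hHint : 0 < ∫ ω, H ω ∂P) (hIanti : AntitoneOn I (Ioi 0))
    (hIcont : ContinuousOn I (Ioi 0)) (hI0 : Tendsto I (𝓝[>] 0) atTop)
    (hItop : Tendsto I atTop atBot) (x : ℝ) :
    ∃ lam, 0 < lam ∧ ∫ ω, H ω * I (lam * H ω) ∂P = x := by
  -- In the coordinate `λ = exp t` the intermediate value theorem applies on all of `ℝ`.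
  set ψ : ℝ → ℝ := fun t => ∫ ω, H ω * I (Real.exp t * H ω) ∂P
  obtain ⟨ωmin, hωmin⟩ := Finite.exists_min H
  obtain ⟨ωmax, hωmax⟩ := Finite.exists_max H
  have hpos : ∀ t ω, Real.exp t * H ω ∈ Ioi 0 := fun t ω => mul_pos (Real.exp_pos t) (hH ω)
  have hbounds : ∀ t, (∫ ω, H ω ∂P) * I (Real.exp t * H ωmax) ≤ ψ t ∧
      ψ t ≤ (∫ ω, H ω ∂P) * I (Real.exp t * H ωmin) := fun t => by
    simp only [ψ, ← integral_mul_const]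
    refine ⟨integral_mono .of_finite .of_finite fun ω => ?_,
      integral_mono .of_finite .of_finite fun ω => ?_⟩
    · refine mul_le_mul_of_nonneg_left (hIanti (hpos t ω) (hpos t ωmax) ?_) (hH ω).le
      exact mul_le_mul_of_nonneg_left (hωmax ω) (Real.exp_pos t).le
    · refine mul_le_mul_of_nonneg_left (hIanti (hpos t ωmin) (hpos t ω) ?_) (hH ω).le
      exact mul_le_mul_of_nonneg_left (hωmin ω) (Real.exp_pos t).le
  have hcont : Continuous ψ := continuous_integral_of_fintype fun ω =>
    continuous_const.mul (hIcont.comp_continuous (by fun_prop) fun t => hpos t ω)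
  have hleft : Tendsto ψ atBot atTop := by
    refine tendsto_atTop_mono (fun t => (hbounds t).1) ((hI0.comp ?_).const_mul_atTop hHint)
    refine tendsto_nhdsWithin_iff.2 ⟨?_, .of_forall fun t => hpos t ωmax⟩
    simpa using Real.tendsto_exp_atBot.mul_const (H ωmax)
  have hright : Tendsto ψ atTop atBot :=
    tendsto_atBot_mono (fun t => (hbounds t).2) <|
      (hItop.comp (Real.tendsto_exp_atTop.atTop_mul_const (hH ωmin))).const_mul_atBot hHint
  obtain ⟨t, ht⟩ := hcont.surjective' hleft hright x
  exact ⟨Real.exp t, Real.exp_pos t, ht⟩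

theorem integral_comp_eq_integral_sub_mul_add (U : ℝ → ℝ) (H G : Ω → ℝ) (lam : ℝ) :
    ∫ ω, U (G ω) ∂P =
      ∫ ω, (U (G ω) - G ω * (lam * H ω)) ∂P + lam * ∫ ω, H ω * G ω ∂P := by
  rw [← integral_const_mul, ← integral_add .of_finite .of_finite]
  congr 1 with ω
  ring

theorem integral_comp_le_of_integral_mul_le {U V : ℝ → ℝ} {H G : Ω → ℝ} {lam x : ℝ}
    (hlam : 0 ≤ lam) (hV : ∀ ω, U (G ω) - G ω * (lam * H ω) ≤ V (lam * H ω))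
    (hG : ∫ ω, H ω * G ω ∂P ≤ x) :
    ∫ ω, U (G ω) ∂P ≤ ∫ ω, V (lam * H ω) ∂P + lam * x := by
  rw [integral_comp_eq_integral_sub_mul_add U H G lam]
  exact add_le_add (integral_mono .of_finite .of_finite hV) (mul_le_mul_of_nonneg_left hG hlam)

theorem integral_comp_eq_of_integral_mul_eq {U V : ℝ → ℝ} {H G : Ω → ℝ} {lam x : ℝ}
    (hV : ∀ ω, V (lam * H ω) = U (G ω) - G ω * (lam * H ω))
    (hG : ∫ ω, H ω * G ω ∂P = x) :
    ∫ ω, U (G ω) ∂P = ∫ ω, V (lam * H ω) ∂P + lam * x := by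
  rw [integral_comp_eq_integral_sub_mul_add U H G lam, hG]
  simp only [hV]

end FiniteSpace

theorem isGreatest_sub_mul_of_tangent {U : ℝ → ℝ} {w d : ℝ}
    (htan : ∀ z, U z ≤ U w + d * (z - w)) :
    IsGreatest {r : ℝ | ∃ z : ℝ, r = U z - z * d} (U w - w * d) :=
  ⟨⟨w, rfl⟩, by rintro r ⟨z, rfl⟩; linarith [htan z]⟩

theorem stmt_14_general
    {Ω : Type*} [Fintype Ω] [Nonempty Ω] [MeasurableSpace Ω] [MeasurableSingletonClass Ω]
    (P : Measure Ω) [IsProbabilityMeasure P]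
    (H : Ω → ℝ) (hH : ∀ ω, 0 < H ω) (hHmean : (∫ ω, H ω ∂P) = 1)
    (x : ℝ)
    (U Ud : ℝ → ℝ)
    (hUderiv : ∀ z, HasDerivAt U (Ud z) z)
    (hUconc : StrictConcaveOn ℝ univ U)
    (hInada2 : Tendsto Ud atTop (nhds 0))
    (I : ℝ → ℝ)
    (hI : ∀ y ∈ Ioi (0:ℝ), Ud (I y) = y)
    (hI' : ∀ z : ℝ, I (Ud z) = z)
    (Util : ℝ → ℝ)
    (hUtil : ∀ y : ℝ, Util y = sSup {r : ℝ | ∃ z : ℝ, r = U z - z * y}) :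
    ∃ lam : ℝ, 0 < lam ∧
      -- (i) the Lagrange multiplier saturates the budget constraint
      (∫ ω, H ω * I (lam * H ω) ∂P) = x ∧
      -- (ii) Ĝ = I(lam·H) is optimal for the utility maximization problem …
      (∀ G : Ω → ℝ, (∫ ω, H ω * G ω ∂P) ≤ x →
        (∫ ω, U (G ω) ∂P) ≤ ∫ ω, U (I (lam * H ω)) ∂P) ∧
      sSup {r : ℝ | ∃ G : Ω → ℝ, (∫ ω, H ω * G ω ∂P) ≤ x ∧ r = ∫ ω, U (G ω) ∂P}
        = ∫ ω, U (I (lam * H ω)) ∂P ∧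
      -- … and the value equals the dual value
      (∫ ω, U (I (lam * H ω)) ∂P) = (∫ ω, Util (lam * H ω) ∂P) + lam * x ∧
      -- (iii) lam minimizes the dual problem over positive multipliers
      (∀ lam' : ℝ, 0 < lam' →
        (∫ ω, Util (lam * H ω) ∂P) + lam * x ≤ (∫ ω, Util (lam' * H ω) ∂P) + lam' * x) := by
  have hUd_anti := hUconc.strictAnti_of_hasDerivAt hUderiv
  have hUd_pos := hUd_anti.pos_of_tendsto_atTop_zero hInada2
  have hIanti := hUd_anti.strictAntiOn_of_rightInvOn hI
  obtain ⟨lam, hlam, hbudget⟩ := exists_pos_integral_mul_comp_mul_eq hH (hHmean ▸ one_pos)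
    hIanti.antitoneOn (continuousOn_of_strictAntiOn_of_leftInverse hIanti hUd_pos hI')
    (tendsto_nhdsGT_zero_atTop_of_strictAntiOn_of_leftInverse hIanti hUd_pos hI')
    (tendsto_atTop_atBot_of_strictAntiOn_of_leftInverse hIanti hUd_pos hI') x
  have hconj : ∀ y > 0, IsGreatest {r : ℝ | ∃ z : ℝ, r = U z - z * y} (U (I y) - I y * y) :=
    fun y hy => isGreatest_sub_mul_of_tangent fun z => by
      simpa only [hI y hy] using
        hUconc.concaveOn.le_add_mul_sub_of_hasDerivAt (mem_univ z) (mem_univ _) (hUderiv (I y))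
  have hUtil_eq : ∀ y > 0, Util y = U (I y) - I y * y := fun y hy =>
    (hUtil y).trans (hconj y hy).csSup_eq
  have hUtil_ge : ∀ y > 0, ∀ z, U z - z * y ≤ Util y := fun y hy z =>
    hUtil_eq y hy ▸ (hconj y hy).2 ⟨z, rfl⟩
  have hweak : ∀ lam' > 0, ∀ G : Ω → ℝ, ∫ ω, H ω * G ω ∂P ≤ x →
      ∫ ω, U (G ω) ∂P ≤ ∫ ω, Util (lam' * H ω) ∂P + lam' * x := fun lam' hlam' G hG =>
    integral_comp_le_of_integral_mul_le hlam'.le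
      (fun ω => hUtil_ge _ (mul_pos hlam' (hH ω)) _) hG
  have hdual : ∫ ω, U (I (lam * H ω)) ∂P = ∫ ω, Util (lam * H ω) ∂P + lam * x :=
    integral_comp_eq_of_integral_mul_eq (fun ω => hUtil_eq _ (mul_pos hlam (hH ω))) hbudget
  have hopt : ∀ G : Ω → ℝ, ∫ ω, H ω * G ω ∂P ≤ x →
      ∫ ω, U (G ω) ∂P ≤ ∫ ω, U (I (lam * H ω)) ∂P := fun G hG => hdual ▸ hweak lam hlam G hG
  refine ⟨lam, hlam, hbudget, hopt, ?_, hdual,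
    fun lam' hlam' => hdual ▸ hweak lam' hlam' _ hbudget.le⟩
  exact IsGreatest.csSup_eq ⟨⟨_, hbudget.le, rfl⟩, by rintro r ⟨G, hG, rfl⟩; exact hopt G hG⟩

/-- **Convex duality for utility maximization on a finite probability space.**
With a pricing density `H > 0`, `E[H] = 1`, and a strictly concave, strictly increasing,
differentiable utility `U` satisfying the Inada conditions, with `I = (U')⁻¹` and
`Ũ(y) = sup_z (U(z) − z y)`: (i) there exists `λ̂ > 0` with `E[H·I(λ̂H)] = x`;
(ii) the supremum of `E[U(G)]` over `E[HG] ≤ x` equals `E[U(I(λ̂H))] = E[Ũ(λ̂H)] + λ̂x`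
and is attained at `Ĝ = I(λ̂H)`; (iii) `λ̂` minimizes `λ ↦ E[Ũ(λH)] + λx` over `λ > 0`. -/
theorem stmt_14
    {Ω : Type*} [Fintype Ω] [Nonempty Ω] [MeasurableSpace Ω] [MeasurableSingletonClass Ω]
    (P : Measure Ω) [IsProbabilityMeasure P] (hP : ∀ ω : Ω, 0 < P {ω})
    (H : Ω → ℝ) (hH : ∀ ω, 0 < H ω) (hHmean : (∫ ω, H ω ∂P) = 1)
    (x : ℝ)
    (U Ud : ℝ → ℝ)
    (hUderiv : ∀ z, HasDerivAt U (Ud z) z)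
    (hUconc : StrictConcaveOn ℝ univ U)
    (hUincr : StrictMono U)
    (hInada1 : Tendsto Ud atBot atTop)
    (hInada2 : Tendsto Ud atTop (nhds 0))
    (I : ℝ → ℝ)
    (hI : ∀ y ∈ Ioi (0:ℝ), Ud (I y) = y)
    (hI' : ∀ z : ℝ, I (Ud z) = z)
    (Util : ℝ → ℝ)
    (hUtil : ∀ y : ℝ, Util y = sSup {r : ℝ | ∃ z : ℝ, r = U z - z * y}) :
    ∃ lam : ℝ, 0 < lam ∧
      -- (i) the Lagrange multiplier saturates the budget constraint
      (∫ ω, H ω * I (lam * H ω) ∂P) = x ∧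
      -- (ii) Ĝ = I(lam·H) is optimal for the utility maximization problem …
      (∀ G : Ω → ℝ, (∫ ω, H ω * G ω ∂P) ≤ x →
        (∫ ω, U (G ω) ∂P) ≤ ∫ ω, U (I (lam * H ω)) ∂P) ∧
      sSup {r : ℝ | ∃ G : Ω → ℝ, (∫ ω, H ω * G ω ∂P) ≤ x ∧ r = ∫ ω, U (G ω) ∂P}
        = ∫ ω, U (I (lam * H ω)) ∂P ∧
      -- … and the value equals the dual value
      (∫ ω, U (I (lam * H ω)) ∂P) = (∫ ω, Util (lam * H ω) ∂P) + lam * x ∧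
      -- (iii) lam minimizes the dual problem over positive multipliers
      (∀ lam' : ℝ, 0 < lam' →
        (∫ ω, Util (lam * H ω) ∂P) + lam * x ≤ (∫ ω, Util (lam' * H ω) ∂P) + lam' * x) :=
  stmt_14_general P H hH hHmean x U Ud hUderiv hUconc hInada2 I hI hI' Util hUtil
end

section
/- Let (X, dist) be a compact metric space, w : X → ℝ upper semicontinuous, and Φ : X → [0, ∞) continuous with Z := {x ∈ X : Φ(x) = 0} nonempty. For each n ≥ 1 let x_n ∈ X be a maximizer of w − nΦ over X (such a maximizer exists by upper semicontinuity and compactness). Then: n·Φ(x_n) → 0 as n → ∞; max_X (w − nΦ) → max_Z w as n → ∞; and every cluster point x̂ of the sequence (x_n) satisfies Φ(x̂) = 0 and w(x̂) = max_Z w. -/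
open Set Filter Topology

/-!
The values `m n = max (w - nΦ)` are nonincreasing in `n` and bounded below by `max_Z w`, so they
converge to some `L ≥ max_Z w`. Testing the maximality of `x k` for `k = n / 2` against `x n` gives
`(n - k) Φ (x n) ≤ m k - m n`, whence `n Φ (x n) ≤ 2 (m (n / 2) - m n) → 0`, and so `w (x n) → L`.
At a cluster point `x̂`, continuity of `Φ` gives `Φ x̂ = 0`, and upper semicontinuity of `w` gives
`L ≤ w x̂ ≤ max_Z w ≤ L`; compactness provides a cluster point, which forces `L = max_Z w`.
-/

theorem UpperSemicontinuousAt.le_of_mapClusterPt_of_tendsto {ι X β : Type*}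
    [TopologicalSpace X] [LinearOrder β] [DenselyOrdered β] [TopologicalSpace β] [OrderTopology β]
    {f : X → β} {a : X} (hf : UpperSemicontinuousAt f a) {l : Filter ι} {u : ι → X}
    (hu : MapClusterPt a l u) {L : β} (hL : Tendsto (f ∘ u) l (𝓝 L)) : L ≤ f a := by
  by_contra! hlt
  obtain ⟨c, hac, hcL⟩ := exists_between hlt
  have hbelow : ∃ᶠ i in l, f (u i) < c := hu.frequently (hf c hac)
  have habove : ∀ᶠ i in l, c < f (u i) := hL (eventually_gt_nhds hcL)
  obtain ⟨i, hi_below, hi_above⟩ := (hbelow.and_eventually habove).exists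
  exact lt_asymm hi_below hi_above

theorem ContinuousAt.eq_of_mapClusterPt_of_tendsto {ι X Y : Type*} [TopologicalSpace X]
    [TopologicalSpace Y] [T2Space Y] {f : X → Y} {a : X} (hf : ContinuousAt f a) {l : Filter ι}
    {u : ι → X} (hu : MapClusterPt a l u) {b : Y} (hb : Tendsto (f ∘ u) l (𝓝 b)) : f a = b :=
  eq_of_nhds_neBot (ClusterPt.mono (hu.continuousAt_comp hf) hb)

section PenalizedValues

variable {a m : ℕ → ℝ}

theorem antitone_succ_of_add_sub_mul_le (ha : ∀ n, 0 ≤ a n)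
    (hm : ∀ k ≥ 1, ∀ n, m n + ((n : ℝ) - k) * a n ≤ m k) :
    Antitone fun k => m (k + 1) := by
  intro k n hkn
  have hgap : (0 : ℝ) ≤ ((n + 1 : ℕ) : ℝ) - (k + 1 : ℕ) := by
    rw [sub_nonneg, Nat.cast_le]
    omega
  linarith [hm (k + 1) (by omega) (n + 1), mul_nonneg hgap (ha (n + 1))]

theorem exists_tendsto_of_add_sub_mul_le (ha : ∀ n, 0 ≤ a n)
    (hm : ∀ k ≥ 1, ∀ n, m n + ((n : ℝ) - k) * a n ≤ m k) {b : ℝ} (hb : ∀ n ≥ 1, b ≤ m n) :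
    ∃ L, b ≤ L ∧ Tendsto m atTop (𝓝 L) := by
  have hbdd : BddBelow (range fun k => m (k + 1)) := by
    refine ⟨b, ?_⟩
    rintro _ ⟨k, rfl⟩
    exact hb (k + 1) (by omega)
  refine ⟨⨅ k, m (k + 1), le_ciInf fun k => hb (k + 1) (by omega), ?_⟩
  exact (tendsto_add_atTop_iff_nat 1).1
    (tendsto_atTop_ciInf (antitone_succ_of_add_sub_mul_le ha hm) hbdd)

theorem tendsto_nat_mul_of_add_sub_mul_le (ha : ∀ n, 0 ≤ a n)
    (hm : ∀ k ≥ 1, ∀ n, m n + ((n : ℝ) - k) * a n ≤ m k) {L : ℝ}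
    (hL : Tendsto m atTop (𝓝 L)) :
    Tendsto (fun n : ℕ => (n : ℝ) * a n) atTop (𝓝 0) := by
  have hhalf : Tendsto (fun n => m (n / 2)) atTop (𝓝 L) :=
    hL.comp (tendsto_atTop_atTop_of_monotone (fun _ _ h => Nat.div_le_div_right h)
      fun k => ⟨2 * k, by omega⟩)
  have hgap : Tendsto (fun n => 2 * (m (n / 2) - m n)) atTop (𝓝 0) := by
    simpa using (hhalf.sub hL).const_mul 2
  refine tendsto_of_tendsto_of_tendsto_of_le_of_le' tendsto_const_nhds hgap
    (Eventually.of_forall fun n => mul_nonneg n.cast_nonneg (ha n)) ?_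
  filter_upwards [eventually_ge_atTop 2] with n hn
  have hhalf_le : (n : ℝ) ≤ 2 * ((n : ℝ) - (n / 2 : ℕ)) := by
    have : 2 * (n / 2) ≤ n := Nat.mul_div_le n 2
    have : (2 * (n / 2 : ℕ) : ℝ) ≤ n := by exact_mod_cast this
    linarith
  nlinarith [hm (n / 2) (by omega) n, ha n]

end PenalizedValues

theorem stmt_15_general
    {X : Type*} [MetricSpace X] [CompactSpace X]
    (w : X → ℝ) (hw : UpperSemicontinuous w)
    (Φ : X → ℝ) (hΦc : Continuous Φ) (hΦnonneg : ∀ x, 0 ≤ Φ x)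
    (hZ : {x : X | Φ x = 0}.Nonempty)
    (x : ℕ → X)
    (hx : ∀ n : ℕ, 1 ≤ n → ∀ z : X, w z - n * Φ z ≤ w (x n) - n * Φ (x n)) :
    Tendsto (fun n : ℕ => (n : ℝ) * Φ (x n)) atTop (nhds 0) ∧
    Tendsto (fun n : ℕ => w (x n) - n * Φ (x n)) atTop
      (nhds (sSup (w '' {x : X | Φ x = 0}))) ∧
    ∀ xhat : X, MapClusterPt xhat atTop x →
      Φ xhat = 0 ∧ w xhat = sSup (w '' {x : X | Φ x = 0}) := by
  obtain ⟨z, hzZ, hzmax⟩ := (hw.upperSemicontinuousOn _).exists_isMaxOn hZ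
    (isClosed_eq hΦc continuous_const).isCompact
  have hsup : sSup (w '' {x : X | Φ x = 0}) = w z := (hzmax.isLUB hzZ).csSup_eq (hZ.image w)
  rw [hsup]
  have hm : ∀ k ≥ 1, ∀ n : ℕ, (w (x n) - n * Φ (x n)) + ((n : ℝ) - k) * Φ (x n) ≤
      w (x k) - k * Φ (x k) := fun k hk n => by linarith [hx k hk (x n)]
  have hzm : ∀ n ≥ 1, w z ≤ w (x n) - n * Φ (x n) := fun n hn => by
    simpa [show Φ z = 0 from hzZ] using hx n hn z
  obtain ⟨L, hzL, hmL⟩ := exists_tendsto_of_add_sub_mul_le (fun n => hΦnonneg (x n)) hm hzm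
  have hnΦ := tendsto_nat_mul_of_add_sub_mul_le (fun n => hΦnonneg (x n)) hm hmL
  have hΦx : Tendsto (Φ ∘ x) atTop (𝓝 0) := by
    refine tendsto_of_tendsto_of_tendsto_of_le_of_le' tendsto_const_nhds hnΦ
      (Eventually.of_forall fun n => hΦnonneg _) ?_
    filter_upwards [eventually_ge_atTop 1] with n hn
    exact le_mul_of_one_le_left (hΦnonneg _) (by exact_mod_cast hn)
  have hwx : Tendsto (fun n => w (x n)) atTop (𝓝 L) := by simpa using hmL.add hnΦ
  have hcluster : ∀ a, MapClusterPt a atTop x → Φ a = 0 ∧ L ≤ w a ∧ w a ≤ w z := fun a ha =>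
    have hΦa := hΦc.continuousAt.eq_of_mapClusterPt_of_tendsto ha hΦx
    ⟨hΦa, (hw.upperSemicontinuousAt a).le_of_mapClusterPt_of_tendsto ha hwx, hzmax hΦa⟩
  obtain ⟨a, -, ha⟩ := isCompact_univ.exists_mapClusterPt (f := atTop) (u := x) (by simp)
  obtain ⟨-, hLa, haz⟩ := hcluster a ha
  obtain rfl : L = w z := le_antisymm (hLa.trans haz) hzL
  refine ⟨hnΦ, hmL, fun a ha => ?_⟩
  obtain ⟨hΦa, hLa, haz⟩ := hcluster a ha
  exact ⟨hΦa, le_antisymm haz hLa⟩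

/-- **Penalization lemma for maximum points (doubling-of-variables).**
On a compact metric space, if `x n` maximizes `w − nΦ` (with `w` u.s.c., `Φ ≥ 0` continuous,
`Z = {Φ = 0}` nonempty), then `nΦ(x n) → 0`, `max (w − nΦ) → max_Z w`, and every cluster
point `x̂` of `(x n)` satisfies `Φ(x̂) = 0` and `w(x̂) = max_Z w`. -/
theorem stmt_15
    {X : Type*} [MetricSpace X] [CompactSpace X] [Nonempty X]
    (w : X → ℝ) (hw : UpperSemicontinuous w)
    (Φ : X → ℝ) (hΦc : Continuous Φ) (hΦnonneg : ∀ x, 0 ≤ Φ x)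
    (hZ : {x : X | Φ x = 0}.Nonempty)
    (x : ℕ → X)
    (hx : ∀ n : ℕ, 1 ≤ n → ∀ z : X, w z - n * Φ z ≤ w (x n) - n * Φ (x n)) :
    Tendsto (fun n : ℕ => (n : ℝ) * Φ (x n)) atTop (nhds 0) ∧
    Tendsto (fun n : ℕ => w (x n) - n * Φ (x n)) atTop
      (nhds (sSup (w '' {x : X | Φ x = 0}))) ∧
    ∀ xhat : X, MapClusterPt xhat atTop x →
      Φ xhat = 0 ∧ w xhat = sSup (w '' {x : X | Φ x = 0}) :=
  stmt_15_general w hw Φ hΦc hΦnonneg hZ x hx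
end
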